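/- Let W be noncentral chi-squared with 1 degree of freedom and noncentrality λ ≥ 0, with CDF G. Then as ε → 0⁺, G(ε) = √(2ε/π)·e^{−λ/2}·(1 + o(1)); consequently the (1/k)-quantile satisfies G^{←}(1/k) = (π/2)·e^{λ}·k^{−2}·(1 + o(1)) as k → ∞. -/

import Mathlib

/-!
For `ε ≥ 0`, `G ε` is the standard Gaussian mass of the interval of half-width `√ε` centred at
`-√λ`, i.e. `∫_{-√λ-√ε}^{-√λ+√ε} φ`. By the fundamental theorem of calculus this is
`2 φ(√λ) √ε (1 + o(1)) = √(2/π) e^{-λ/2} √ε (1 + o(1))`. On `[0, ∞)` the CDF `G` is continuous and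
strictly increasing from `G 0 = 0`, so `G^{←}(1/k)` is the positive solution `q_k` of
`G q_k = 1/k`, and `q_k → 0⁺`. Evaluating the asymptotics at `q_k` and solving for `q_k` gives
`q_k ~ (π/2) e^λ k⁻²`.
-/

open MeasureTheory ProbabilityTheory Filter Set Topology Real

section SymmetricIntegral

variable {f : ℝ → ℝ} (c : ℝ)

theorem hasDerivAt_integral_sub_add (hf : Continuous f) (s : ℝ) :
    HasDerivAt (fun s => ∫ t in (c - s)..(c + s), f t) (f (c + s) + f (c - s)) s := by
  have hP (y : ℝ) : HasDerivAt (fun u => ∫ t in c..u, f t) (f y) y :=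
    (hf.integral_hasStrictDerivAt c y).hasDerivAt
  have h := ((hP (c + s)).comp s ((hasDerivAt_id s).const_add c)).sub
    ((hP (c - s)).comp s ((hasDerivAt_id s).const_sub c))
  refine (h.congr_deriv (by simp)).congr_of_eventuallyEq (.of_forall fun s => ?_)
  exact (intervalIntegral.integral_interval_sub_left (hf.intervalIntegrable _ _)
    (hf.intervalIntegrable _ _)).symm

theorem strictMono_integral_sub_add (hf : Continuous f) (hpos : ∀ x, 0 < f x) :
    StrictMono fun s => ∫ t in (c - s)..(c + s), f t :=
  strictMono_of_hasDerivAt_pos (hasDerivAt_integral_sub_add c hf)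
    fun _ => add_pos (hpos _) (hpos _)

theorem tendsto_integral_sub_add_div (hf : Continuous f) :
    Tendsto (fun s => (∫ t in (c - s)..(c + s), f t) / s) (𝓝[>] 0) (𝓝 (2 * f c)) := by
  have h := (hasDerivAt_integral_sub_add c hf 0).tendsto_slope_zero_right
  simp only [zero_add, sub_zero, add_zero, intervalIntegral.integral_same, smul_eq_mul] at h
  rw [two_mul]
  exact h.congr fun s => inv_mul_eq_div s _

end SymmetricIntegral

theorem tendsto_sqrt_nhdsGT_zero : Tendsto (√·) (𝓝[>] 0) (𝓝[>] 0) := by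
  have h := continuous_sqrt.continuousWithinAt.tendsto_nhdsWithin (x := 0) (t := Ioi 0)
    fun _ hx => sqrt_pos.2 hx
  rwa [sqrt_zero] at h

theorem preimage_add_sq_Iic (a : ℝ) {x : ℝ} (hx : 0 ≤ x) :
    (fun g : ℝ => (g + a) ^ 2) ⁻¹' Iic x = Icc (-a - √x) (-a + √x) := by
  ext g
  simp only [mem_preimage, mem_Iic, mem_Icc, Real.sq_le hx]
  constructor <;> rintro ⟨h₁, h₂⟩ <;> constructor <;> linarith

theorem cdf_map_add_sq (μ : Measure ℝ) [IsProbabilityMeasure μ] (a : ℝ) {x : ℝ} (hx : 0 ≤ x) :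
    cdf (μ.map fun g => (g + a) ^ 2) x = μ.real (Icc (-a - √x) (-a + √x)) := by
  have : IsProbabilityMeasure (μ.map fun g => (g + a) ^ 2) :=
    Measure.isProbabilityMeasure_map (by fun_prop)
  rw [cdf_eq_real, map_measureReal_apply (by fun_prop) measurableSet_Iic, preimage_add_sq_Iic a hx]

theorem continuous_gaussianPDFReal (m : ℝ) (v : NNReal) : Continuous (gaussianPDFReal m v) := by
  unfold gaussianPDFReal
  fun_prop

theorem gaussianReal_real_Icc (m : ℝ) {v : NNReal} (hv : v ≠ 0) {a b : ℝ} (hab : a ≤ b) :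
    (gaussianReal m v).real (Icc a b) = ∫ t in a..b, gaussianPDFReal m v t := by
  rw [measureReal_def, gaussianReal_apply_eq_integral m hv, ENNReal.toReal_ofReal
    (setIntegral_nonneg measurableSet_Icc fun t _ => gaussianPDFReal_nonneg m v t),
    integral_Icc_eq_integral_Ioc, intervalIntegral.integral_of_le hab]

theorem two_mul_gaussianPDFReal_zero_one (x : ℝ) :
    2 * gaussianPDFReal 0 1 x = √(2 / π) * exp (-x ^ 2 / 2) := by
  have hsq : √(2 / π) * √(2 * π) = 2 := by
    rw [← Real.sqrt_mul (by positivity), show 2 / π * (2 * π) = 2 ^ 2 by field_simp,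
      Real.sqrt_sq zero_le_two]
  rw [gaussianPDFReal, ← mul_assoc]
  simp only [NNReal.coe_one, mul_one, sub_zero]
  congr 1
  nth_rw 1 [← hsq]
  rw [mul_inv_cancel_right₀ (by positivity)]

section Quantile

variable {G : ℝ → ℝ}

theorem csInf_setOf_le_eq (hmono : Monotone G) (hstrict : StrictMonoOn G (Ici 0)) {x : ℝ}
    (hx : 0 < x) : sInf {y | G x ≤ G y} = x := by
  refine IsLeast.csInf_eq ⟨le_refl (G x), fun y hy => not_lt.1 fun hyx => ?_⟩
  have : G (max y 0) < G x := hstrict (le_max_right y 0) hx.le (max_lt hyx hx)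
  exact (hy.trans (hmono (le_max_left y 0))).not_gt this

theorem apply_csInf_setOf_le_eq (hmono : Monotone G) (hstrict : StrictMonoOn G (Ici 0))
    (hcont : ContinuousOn G (Ici 0)) (htop : Tendsto G atTop (𝓝 1)) {t : ℝ} (h0 : G 0 < t)
    (ht : t < 1) : 0 < sInf {x | t ≤ G x} ∧ G (sInf {x | t ≤ G x}) = t := by
  obtain ⟨B, hBt, hB⟩ := ((htop.eventually (eventually_ge_nhds ht)).and
    (eventually_ge_atTop 0)).exists
  obtain ⟨x, hx, rfl⟩ := intermediate_value_Icc hB (hcont.mono Icc_subset_Ici_self) ⟨h0.le, hBt⟩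
  have hx : 0 < x := hx.1.lt_of_ne (by rintro rfl; exact h0.false)
  rw [csInf_setOf_le_eq hmono hstrict hx]
  exact ⟨hx, rfl⟩

theorem tendsto_nhdsGT_zero_of_tendsto_comp {ι : Type*} {l : Filter ι} {q : ι → ℝ}
    (hmono : Monotone G) (hpos : ∀ x, 0 < x → 0 < G x) (hq : ∀ᶠ i in l, 0 < q i)
    (hGq : Tendsto (fun i => G (q i)) l (𝓝 0)) : Tendsto q l (𝓝[>] 0) := by
  refine tendsto_nhdsWithin_iff.2 ⟨tendsto_order.2 ⟨fun a ha => ?_, fun δ hδ => ?_⟩, hq⟩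
  · exact hq.mono fun i hi => ha.trans hi
  · exact (hGq.eventually (eventually_lt_nhds (hpos δ hδ))).mono fun i hi => hmono.reflect_lt hi

end Quantile

theorem tendsto_div_sq_of_tendsto_div_mul_sqrt {ι : Type*} {l : Filter ι} {F : ℝ → ℝ} {c : ℝ}
    {q : ι → ℝ} (hF : Tendsto (fun ε => F ε / (c * √ε)) (𝓝[>] 0) (𝓝 1))
    (hq : Tendsto q l (𝓝[>] 0)) : Tendsto (fun i => q i / (F (q i) / c) ^ 2) l (𝓝 1) := by
  have h := ((hF.comp hq).inv₀ one_ne_zero).pow 2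
  rw [inv_one, one_pow] at h
  refine h.congr' ((eventually_mem_of_tendsto_nhdsWithin hq).mono fun i (hi : 0 < q i) => ?_)
  simp only [Function.comp_apply, inv_div, div_pow, mul_pow, sq_sqrt hi.le, div_div_eq_mul_div]
  ring

noncomputable def noncentralChiSqOne (lam : ℝ) : Measure ℝ :=
  (gaussianReal 0 1).map fun g => (g + √lam) ^ 2

section NoncentralChiSqOne

variable (lam : ℝ)

instance : IsProbabilityMeasure (noncentralChiSqOne lam) :=
  Measure.isProbabilityMeasure_map (by fun_prop)

theorem cdf_noncentralChiSqOne {x : ℝ} (hx : 0 ≤ x) :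
    cdf (noncentralChiSqOne lam) x =
      ∫ t in (-√lam - √x)..(-√lam + √x), gaussianPDFReal 0 1 t := by
  rw [noncentralChiSqOne, cdf_map_add_sq _ _ hx,
    gaussianReal_real_Icc 0 one_ne_zero (by linarith [sqrt_nonneg x])]

theorem cdf_noncentralChiSqOne_zero : cdf (noncentralChiSqOne lam) 0 = 0 := by
  simp [cdf_noncentralChiSqOne lam le_rfl]

theorem strictMonoOn_cdf_noncentralChiSqOne :
    StrictMonoOn (cdf (noncentralChiSqOne lam)) (Ici 0) := fun x hx y hy hxy => by
  rw [cdf_noncentralChiSqOne lam hx, cdf_noncentralChiSqOne lam hy]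
  exact strictMono_integral_sub_add _ (continuous_gaussianPDFReal 0 1)
    (gaussianPDFReal_pos 0 1 · one_ne_zero) (sqrt_lt_sqrt hx hxy)

theorem continuousOn_cdf_noncentralChiSqOne :
    ContinuousOn (cdf (noncentralChiSqOne lam)) (Ici 0) := by
  have h : Continuous fun s => ∫ t in (-√lam - s)..(-√lam + s), gaussianPDFReal 0 1 t :=
    continuous_iff_continuousAt.2 fun s =>
      (hasDerivAt_integral_sub_add _ (continuous_gaussianPDFReal 0 1) s).continuousAt
  exact (h.comp continuous_sqrt).continuousOn.congr fun x hx => cdf_noncentralChiSqOne lam hx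

theorem tendsto_cdf_noncentralChiSqOne_div {lam : ℝ} (hlam : 0 ≤ lam) :
    Tendsto (fun ε => cdf (noncentralChiSqOne lam) ε / (√(2 / π) * exp (-lam / 2) * √ε))
      (𝓝[>] 0) (𝓝 1) := by
  have h := ((tendsto_integral_sub_add_div (-√lam) (continuous_gaussianPDFReal 0 1)).comp
    tendsto_sqrt_nhdsGT_zero).div_const (√(2 / π) * exp (-lam / 2))
  rw [two_mul_gaussianPDFReal_zero_one, neg_sq, sq_sqrt hlam, div_self (by positivity)] at h
  refine h.congr' (eventually_mem_nhdsWithin.mono fun ε (hε : 0 < ε) => ?_)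
  simp only [Function.comp_apply]
  rw [cdf_noncentralChiSqOne lam hε.le, div_div, mul_comm (√ε)]

end NoncentralChiSqOne

/-- Small-argument asymptotics of the CDF `G` of a noncentral chi-squared
variable `W = (G₀ + √λ)²` with one degree of freedom:
`G(ε) = √(2ε/π) e^{−λ/2} (1 + o(1))` as `ε → 0⁺`, and consequently the
`(1/k)`-quantile satisfies `G^{←}(1/k) = (π/2) e^{λ} k^{−2} (1 + o(1))`
as `k → ∞`. -/
theorem stmt_11 (lam : ℝ) (hlam : 0 ≤ lam)
    (G : ℝ → ℝ)
    (hG : ∀ x : ℝ, G x =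
      (((gaussianReal 0 1).map
          (fun g : ℝ => (g + Real.sqrt lam) ^ 2)) (Set.Iic x)).toReal)
    (Ginv : ℝ → ℝ) (hGinv : ∀ t : ℝ, Ginv t = sInf {x : ℝ | t ≤ G x}) :
    Tendsto (fun ε : ℝ =>
        G ε / (Real.sqrt (2 * ε / Real.pi) * Real.exp (-lam / 2)))
      (nhdsWithin 0 (Set.Ioi 0)) (nhds 1)
    ∧ Tendsto (fun k : ℕ =>
        Ginv (1 / k) / ((Real.pi / 2) * Real.exp lam / (k : ℝ) ^ 2))
      atTop (nhds 1) := by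
  obtain rfl : G = cdf (noncentralChiSqOne lam) := funext fun x => by
    rw [hG, cdf_eq_real, noncentralChiSqOne, measureReal_def]
  set c := √(2 / π) * exp (-lam / 2)
  have hasymp := tendsto_cdf_noncentralChiSqOne_div hlam
  have hquantile : ∀ᶠ k : ℕ in atTop,
      0 < Ginv (1 / k) ∧ cdf (noncentralChiSqOne lam) (Ginv (1 / k)) = 1 / k := by
    filter_upwards [eventually_ge_atTop 2] with k hk
    have hk : (2 : ℝ) ≤ k := by exact_mod_cast hk
    rw [hGinv]
    exact apply_csInf_setOf_le_eq (monotone_cdf _) (strictMonoOn_cdf_noncentralChiSqOne lam)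
      (continuousOn_cdf_noncentralChiSqOne lam) (tendsto_cdf_atTop _)
      (by rw [cdf_noncentralChiSqOne_zero]; positivity) ((div_lt_one (by linarith)).2 (by linarith))
  have hq : Tendsto (fun k : ℕ => Ginv (1 / k)) atTop (𝓝[>] 0) := by
    refine tendsto_nhdsGT_zero_of_tendsto_comp (monotone_cdf _) (fun x hx => ?_)
      (hquantile.mono fun k hk => hk.1)
      (tendsto_one_div_atTop_nhds_zero_nat.congr' (hquantile.mono fun k hk => hk.2.symm))
    simpa [cdf_noncentralChiSqOne_zero] using
      strictMonoOn_cdf_noncentralChiSqOne lam self_mem_Ici hx.le hx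
  constructor
  · refine hasymp.congr' (eventually_mem_nhdsWithin.mono fun ε (hε : 0 < ε) => ?_)
    rw [mul_right_comm, ← sqrt_mul' _ hε.le, div_mul_eq_mul_div]
  · have hc : c ^ 2 = 2 / π / exp lam := by
      rw [mul_pow, sq_sqrt (by positivity), ← exp_nat_mul, div_eq_mul_inv _ (exp lam), ← exp_neg]
      ring_nf
    refine (tendsto_div_sq_of_tendsto_div_mul_sqrt hasymp hq).congr' (hquantile.mono fun k hk => ?_)
    rw [hk.2, div_pow, hc]
    field_simp
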